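/- arXiv:2510.22299 — 3 statements merged into one kernel-verified Lean document; each statement's English description precedes it below -/
import Mathlib

section
/- Fix 0 < h < 2 and define the symplectic Euler iterates for the harmonic oscillator by x_{n+1} = x_n + h p_n and p_{n+1} = p_n − h x_{n+1}, starting from (x₀, p₀) ∈ ℝ². Then for every n ∈ ℕ, the energy E_n = (x_n² + p_n²)/2 satisfies the two-sided bound ((2 − h)/(2 + h)) E₀ ≤ E_n ≤ ((2 + h)/(2 − h)) E₀, where E₀ = (x₀² + p₀²)/2. In particular, the energy along the symplectic Euler trajectory remains bounded above and below for all n. -/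
/-!
Symplectic Euler does not conserve the energy `E`, but it exactly conserves the modified energy
`E + h x p / 2`. Since `|x p| ≤ E`, this invariant is squeezed between `(1 - h/2) E` and
`(1 + h/2) E`, so along a trajectory `E` can only move within the factor `(2 + h)/(2 - h)`.
-/

noncomputable section

namespace HarmonicOscillator

def energy (x p : ℝ) : ℝ := (x ^ 2 + p ^ 2) / 2

def modifiedEnergy (h x p : ℝ) : ℝ := energy x p + h * x * p / 2

theorem modifiedEnergy_symplecticEuler_step (h x p : ℝ) :
    modifiedEnergy h (x + h * p) (p - h * (x + h * p)) = modifiedEnergy h x p := by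
  unfold modifiedEnergy energy
  ring

theorem modifiedEnergy_symplecticEuler_eq (h : ℝ) (x p : ℕ → ℝ)
    (hx : ∀ n, x (n + 1) = x n + h * p n) (hp : ∀ n, p (n + 1) = p n - h * x (n + 1))
    (n : ℕ) : modifiedEnergy h (x n) (p n) = modifiedEnergy h (x 0) (p 0) := by
  induction n with
  | zero => rfl
  | succ n ih => rw [hp, hx, modifiedEnergy_symplecticEuler_step, ih]

theorem abs_mul_le_energy (x p : ℝ) : |x * p| ≤ energy x p := by
  unfold energy
  rw [abs_le]
  constructor <;> nlinarith [sq_nonneg (x + p), sq_nonneg (x - p)]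

theorem abs_modifiedEnergy_sub_energy_le (h x p : ℝ) :
    |modifiedEnergy h x p - energy x p| ≤ |h| / 2 * energy x p := by
  have hdiff : modifiedEnergy h x p - energy x p = h / 2 * (x * p) := by
    unfold modifiedEnergy
    ring
  rw [hdiff, abs_mul, abs_div, abs_two]
  exact mul_le_mul_of_nonneg_left (abs_mul_le_energy x p) (by positivity)

end HarmonicOscillator

end

open HarmonicOscillator in
/-- For the symplectic Euler discretisation of the harmonic oscillator with step size
`0 < h < 2`, the energy `Eₙ = (xₙ² + pₙ²)/2` satisfies the two-sided bound
`((2-h)/(2+h)) E₀ ≤ Eₙ ≤ ((2+h)/(2-h)) E₀`. -/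
theorem symplectic_euler_energy_bounds
    (h : ℝ) (hh0 : 0 < h) (hh2 : h < 2) (x p : ℕ → ℝ)
    (hx : ∀ n : ℕ, x (n + 1) = x n + h * p n)
    (hp : ∀ n : ℕ, p (n + 1) = p n - h * x (n + 1)) :
    ∀ n : ℕ,
      (2 - h) / (2 + h) * (((x 0) ^ 2 + (p 0) ^ 2) / 2)
          ≤ ((x n) ^ 2 + (p n) ^ 2) / 2 ∧
      ((x n) ^ 2 + (p n) ^ 2) / 2
          ≤ (2 + h) / (2 - h) * (((x 0) ^ 2 + (p 0) ^ 2) / 2) := by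
  have energy_comparable : ∀ m n,
      (2 - h) * energy (x m) (p m) ≤ (2 + h) * energy (x n) (p n) := by
    intro m n
    have hm := (abs_le.mp (abs_modifiedEnergy_sub_energy_le h (x m) (p m))).1
    have hn := (abs_le.mp (abs_modifiedEnergy_sub_energy_le h (x n) (p n))).2
    rw [modifiedEnergy_symplecticEuler_eq h x p hx hp, abs_of_pos hh0] at hm hn
    linarith
  intro n
  constructor
  · rw [div_mul_eq_mul_div, div_le_iff₀ (by linarith)]
    simpa only [energy, mul_comm] using energy_comparable 0 n
  · rw [div_mul_eq_mul_div, le_div_iff₀ (by linarith)]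
    simpa only [energy, mul_comm] using energy_comparable n 0
end

section
/- Let A ∈ ℝ^{H×d} with A ≠ 0, b ∈ ℝ^H, and let σ : ℝ^H → ℝ^H be the componentwise ReLU. Then for every step size h with 0 ≤ h ≤ 2/‖A‖₂², the layer map ψ(x) = x − h Aᵀσ(Ax + b) is non-expansive: ‖ψ(x) − ψ(y)‖₂ ≤ ‖x − y‖₂ for all x, y ∈ ℝ^d. -/
open scoped RealInnerProductSpace

lemma relu_firm (a c : ℝ) :
    (max a 0 - max c 0) ^ 2 ≤ (a - c) * (max a 0 - max c 0) := by
  rcases le_total a 0 with ha | ha <;> rcases le_total c 0 with hc | hc <;>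
    simp [max_eq_right, max_eq_left, ha, hc] <;> nlinarith

/-- The layer map `ψ(x) = x - h Aᵀ ReLU(Ax + b)` is non-expansive for any step size
`0 ≤ h ≤ 2/‖A‖₂²`, where `A ≠ 0` is linear with spectral (operator) norm `‖A‖₂`. -/
theorem relu_gradient_layer_nonexpansive
    {d H : ℕ} (A : EuclideanSpace ℝ (Fin d) →L[ℝ] EuclideanSpace ℝ (Fin H)) (hA : A ≠ 0)
    (b : EuclideanSpace ℝ (Fin H))
    (σ : EuclideanSpace ℝ (Fin H) → EuclideanSpace ℝ (Fin H))
    (hσ : ∀ (z : EuclideanSpace ℝ (Fin H)) (i : Fin H), σ z i = max (z i) 0)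
    (h : ℝ) (hh0 : 0 ≤ h) (hh2 : h ≤ 2 / ‖A‖ ^ 2) :
    ∀ x y : EuclideanSpace ℝ (Fin d),
      ‖(x - h • (ContinuousLinearMap.adjoint A) (σ (A x + b)))
          - (y - h • (ContinuousLinearMap.adjoint A) (σ (A y + b)))‖ ≤ ‖x - y‖ := by
  intro x y
  have hApos : (0:ℝ) < ‖A‖ := norm_pos_iff.mpr hA
  have hhA : h * ‖A‖ ^ 2 ≤ 2 := by
    rw [le_div_iff₀ (by positivity)] at hh2; linarith
  set u : EuclideanSpace ℝ (Fin H) := σ (A x + b) - σ (A y + b) with hu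
  have hrw : (x - h • (ContinuousLinearMap.adjoint A) (σ (A x + b)))
          - (y - h • (ContinuousLinearMap.adjoint A) (σ (A y + b)))
        = (x - y) - h • (ContinuousLinearMap.adjoint A) u := by
    rw [hu, map_sub, smul_sub]; abel
  -- key inner product inequality
  have key : ‖u‖ ^ 2 ≤ ⟪A (x - y), u⟫ := by
    have hAxy : A (x - y) = (A x + b) - (A y + b) := by rw [map_sub]; abel
    rw [hAxy, ← real_inner_self_eq_norm_sq]
    have h1 : ⟪u, u⟫ = ∑ i, u i * u i := by
      simp only [PiLp.inner_apply, RCLike.inner_apply, conj_trivial]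
    have h2 : ⟪(A x + b) - (A y + b), u⟫ = ∑ i, ((A x + b) i - (A y + b) i) * u i := by
      simp [PiLp.inner_apply, RCLike.inner_apply]
      exact Finset.sum_congr rfl fun _ _ => mul_comm _ _
    rw [h1, h2]
    apply Finset.sum_le_sum
    intro i _
    have hui : u i = max ((A x + b) i) 0 - max ((A y + b) i) 0 := by
      simp [hu, hσ]
    rw [hui]
    have := relu_firm ((A x + b) i) ((A y + b) i)
    nlinarith [this]
  have hAdj : ⟪x - y, (ContinuousLinearMap.adjoint A) u⟫ = ⟪A (x - y), u⟫ := by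
    rw [ContinuousLinearMap.adjoint_inner_right]
  have hnormAu : ‖(ContinuousLinearMap.adjoint A) u‖ ≤ ‖A‖ * ‖u‖ := by
    calc ‖(ContinuousLinearMap.adjoint A) u‖ ≤ ‖ContinuousLinearMap.adjoint A‖ * ‖u‖ :=
          (ContinuousLinearMap.adjoint A).le_opNorm u
      _ = ‖A‖ * ‖u‖ := by rw [LinearIsometryEquiv.norm_map ContinuousLinearMap.adjoint A]
  rw [hrw]
  have hsq : ‖(x - y) - h • (ContinuousLinearMap.adjoint A) u‖ ^ 2 ≤ ‖x - y‖ ^ 2 := by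
    rw [@norm_sub_sq_real]
    have hinner : ⟪x - y, h • (ContinuousLinearMap.adjoint A) u⟫ = h * ⟪A (x - y), u⟫ := by
      rw [real_inner_smul_right, hAdj]
    have hns : ‖h • (ContinuousLinearMap.adjoint A) u‖ ≤ h * (‖A‖ * ‖u‖) := by
      rw [norm_smul, Real.norm_eq_abs, abs_of_nonneg hh0]
      exact mul_le_mul_of_nonneg_left hnormAu hh0
    have hns2 : ‖h • (ContinuousLinearMap.adjoint A) u‖ ^ 2 ≤ (h * (‖A‖ * ‖u‖)) ^ 2 :=
      pow_le_pow_left₀ (norm_nonneg _) hns 2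
    nlinarith [sq_nonneg ‖u‖, mul_nonneg hh0 (sq_nonneg ‖u‖)]
  exact (pow_le_pow_iff_left₀ (norm_nonneg _) (norm_nonneg _) two_ne_zero).mp hsq
end

section
/- Let X̂ : ℝ^d → ℝ^d, let V : ℝ^d → ℝ be differentiable, let μ > 0, and let x ∈ ℝ^d be a point with V(x) ≥ 0 and ∇V(x) ≠ 0. Define the projected vector field X(x) = X̂(x) − ∇V(x) · ReLU(⟨∇V(x), X̂(x)⟩ + μV(x)) / ‖∇V(x)‖₂², where ReLU(s) = max(s, 0). Then ⟨∇V(x), X(x)⟩ ≤ −μV(x) ≤ 0; i.e., V decreases along the vector field X at x. -/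
open scoped RealInnerProductSpace

theorem inner_sub_max_div_norm_sq_smul_eq_min {E : Type*} [NormedAddCommGroup E]
    [InnerProductSpace ℝ E] {g : E} (hg : g ≠ 0) (v : E) (c : ℝ) :
    ⟪g, v - (max (⟪g, v⟫ + c) 0 / ‖g‖ ^ 2) • g⟫ = min (-c) ⟪g, v⟫ := by
  rw [inner_sub_right, real_inner_smul_right, real_inner_self_eq_norm_sq,
    div_mul_cancel₀ _ (by positivity), ← min_sub_sub_left, sub_add_cancel_left, sub_zero]

theorem kolter_manek_lyapunov_decrease_general
    {d : ℕ} (Xhat : EuclideanSpace ℝ (Fin d) → EuclideanSpace ℝ (Fin d))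
    (V : EuclideanSpace ℝ (Fin d) → ℝ) (μ : ℝ) (hμ : 0 < μ)
    (x : EuclideanSpace ℝ (Fin d)) (g : EuclideanSpace ℝ (Fin d))
    (hV : 0 ≤ V x) (hg0 : g ≠ 0)
    (X : EuclideanSpace ℝ (Fin d))
    (hX : X = Xhat x - (max (⟪g, Xhat x⟫ + μ * V x) 0 / ‖g‖ ^ 2) • g) :
    ⟪g, X⟫ ≤ -(μ * V x) ∧ -(μ * V x) ≤ 0 := by
  refine ⟨?_, neg_nonpos.mpr (mul_nonneg hμ.le hV)⟩
  rw [hX, inner_sub_max_div_norm_sq_smul_eq_min hg0]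
  exact min_le_left _ _

/-- Kolter–Manek stable vector field construction: projecting `X̂` along `∇V` makes `V`
decrease along the resulting vector field `X`:
`⟪∇V(x), X(x)⟫ ≤ -μ V(x) ≤ 0` whenever `V(x) ≥ 0` and `∇V(x) ≠ 0`. -/
theorem kolter_manek_lyapunov_decrease
    {d : ℕ} (Xhat : EuclideanSpace ℝ (Fin d) → EuclideanSpace ℝ (Fin d))
    (V : EuclideanSpace ℝ (Fin d) → ℝ) (μ : ℝ) (hμ : 0 < μ)
    (x : EuclideanSpace ℝ (Fin d)) (g : EuclideanSpace ℝ (Fin d))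
    (hg : HasGradientAt V g x) (hV : 0 ≤ V x) (hg0 : g ≠ 0)
    (X : EuclideanSpace ℝ (Fin d))
    (hX : X = Xhat x - (max (⟪g, Xhat x⟫ + μ * V x) 0 / ‖g‖ ^ 2) • g) :
    ⟪g, X⟫ ≤ -(μ * V x) ∧ -(μ * V x) ≤ 0 :=
  kolter_manek_lyapunov_decrease_general Xhat V μ hμ x g hV hg0 X hX
end
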